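/- Suppose (M, J) is a pair of differentiable functions on [0,T] solving the system: Ṁ = −[2A + |C|² + Γ⁽¹⁾ B'(R+MD'D)⁻¹(B+D'C)]M − Q + (B+D'C)'(R+MD'D)⁻¹(B+D'C)M² − B'(R+MD'D)⁻¹(B+D'C)M²/J with M(T)=G, and the corresponding equation for J with J(T)=G/h, and suppose M(s) > 0 and J(s) > 0 for all s. Then (M, N) with N := M/J solves the coupled Riccati system: Ṁ = −[2A+|C|²+Γ⁽¹⁾B'(R+MD'D)⁻¹(B+D'C)]M − Q + (B+D'C)'(R+MD'D)⁻¹(B+D'C)M² − B'(R+MD'D)⁻¹(B+D'C)MN with M(T)=G, and Ṅ = −[2A+Γ⁽¹⁾B'(R+MD'D)⁻¹B]N + B'(R+MD'D)⁻¹(B+D'C)MN − B'(R+MD'D)⁻¹B N² with N(T)=h, and N(s) > 0 for all s. -/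

import Mathlib

/-!
Differentiate `N = M / J` by the quotient rule. With `β = B'S⁻¹B`, `κ = B'S⁻¹D'C` and
`ν = (D'C)'S⁻¹(B+D'C)`, bilinearity gives `B'S⁻¹(B+D'C) = β + κ` and
`(B+D'C)'S⁻¹(B+D'C) = β + κ + ν`; in `Ṁ/J - M J̇/J²` the terms carrying `|C|²`, `Q`, `Γκ` and
`νM` then cancel in pairs, leaving the Riccati equation for `N`.
-/

open Matrix

/-- `S(s) = R(s) + M(s)·D(s)ᵀD(s)`. -/
def Smat {l d : ℕ} (R : ℝ → Matrix (Fin l) (Fin l) ℝ) (M : ℝ → ℝ)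
    (D : ℝ → Matrix (Fin d) (Fin l) ℝ) (s : ℝ) : Matrix (Fin l) (Fin l) ℝ :=
  R s + M s • ((D s)ᵀ * D s)

theorem hasDerivAt_div_of_riccati_pair {M J : ℝ → ℝ} {s a c γ q β κ ν : ℝ}
    (hMs : M s ≠ 0) (hJs : J s ≠ 0)
    (hM : HasDerivAt M (-(2 * a + c + γ * (β + κ)) * M s - q + (β + κ + ν) * M s ^ 2
      - (β + κ) * M s ^ 2 / J s) s)
    (hJ : HasDerivAt J (-(c - ν * M s + γ * κ + q / M s) * J s - κ * M s) s) :
    HasDerivAt (fun t => M t / J t) (-(2 * a + γ * β) * (M s / J s)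
      + (β + κ) * M s * (M s / J s) - β * (M s / J s) ^ 2) s :=
  (hM.div hJ hJs).congr_deriv (by field_simp; ring)

theorem MJ_system_to_MN_system_general
    {l d : ℕ} (T : ℝ)
    (A Q Γ : ℝ → ℝ)
    (B : ℝ → Fin l → ℝ)
    (C : ℝ → Fin d → ℝ)
    (D : ℝ → Matrix (Fin d) (Fin l) ℝ)
    (R : ℝ → Matrix (Fin l) (Fin l) ℝ)
    (G h : ℝ) (hG : 0 < G)
    (M J : ℝ → ℝ)
    (hMpos : ∀ s ∈ Set.Icc (0 : ℝ) T, 0 < M s)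
    (hJpos : ∀ s ∈ Set.Icc (0 : ℝ) T, 0 < J s)
    (hMT : M T = G) (hJT : J T = G / h)
    (hMode : ∀ s ∈ Set.Icc (0 : ℝ) T, HasDerivAt M
      (-(2 * A s + (∑ i, C s i ^ 2)
          + Γ s * (B s ⬝ᵥ ((Smat R M D s)⁻¹ *ᵥ (B s + (D s)ᵀ *ᵥ C s)))) * M s
        - Q s
        + ((B s + (D s)ᵀ *ᵥ C s) ⬝ᵥ ((Smat R M D s)⁻¹ *ᵥ (B s + (D s)ᵀ *ᵥ C s))) * M s ^ 2
        - (B s ⬝ᵥ ((Smat R M D s)⁻¹ *ᵥ (B s + (D s)ᵀ *ᵥ C s))) * M s ^ 2 / J s) s)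
    (hJode : ∀ s ∈ Set.Icc (0 : ℝ) T, HasDerivAt J
      (-((∑ i, C s i ^ 2)
          - (((D s)ᵀ *ᵥ C s) ⬝ᵥ ((Smat R M D s)⁻¹ *ᵥ (B s + (D s)ᵀ *ᵥ C s))) * M s
          + Γ s * (B s ⬝ᵥ ((Smat R M D s)⁻¹ *ᵥ ((D s)ᵀ *ᵥ C s)))
          + Q s / M s) * J s
        - (B s ⬝ᵥ ((Smat R M D s)⁻¹ *ᵥ ((D s)ᵀ *ᵥ C s))) * M s) s) :
    let N : ℝ → ℝ := fun s => M s / J s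
    N T = h ∧
    (∀ s ∈ Set.Icc (0 : ℝ) T, 0 < N s) ∧
    (∀ s ∈ Set.Icc (0 : ℝ) T, HasDerivAt M
      (-(2 * A s + (∑ i, C s i ^ 2)
          + Γ s * (B s ⬝ᵥ ((Smat R M D s)⁻¹ *ᵥ (B s + (D s)ᵀ *ᵥ C s)))) * M s
        - Q s
        + ((B s + (D s)ᵀ *ᵥ C s) ⬝ᵥ ((Smat R M D s)⁻¹ *ᵥ (B s + (D s)ᵀ *ᵥ C s))) * M s ^ 2
        - (B s ⬝ᵥ ((Smat R M D s)⁻¹ *ᵥ (B s + (D s)ᵀ *ᵥ C s))) * M s * N s) s) ∧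
    (∀ s ∈ Set.Icc (0 : ℝ) T, HasDerivAt N
      (-(2 * A s + Γ s * (B s ⬝ᵥ ((Smat R M D s)⁻¹ *ᵥ B s))) * N s
        + (B s ⬝ᵥ ((Smat R M D s)⁻¹ *ᵥ (B s + (D s)ᵀ *ᵥ C s))) * M s * N s
        - (B s ⬝ᵥ ((Smat R M D s)⁻¹ *ᵥ B s)) * N s ^ 2) s) := by
  dsimp only
  refine ⟨?_, fun s hs => div_pos (hMpos s hs) (hJpos s hs),
    fun s hs => (hMode s hs).congr_deriv (by ring), fun s hs => ?_⟩
  · rw [hMT, hJT, div_div_cancel₀ hG.ne']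
  · have hM := hMode s hs
    have hJ := hJode s hs
    rw [add_dotProduct] at hM
    simp only [mulVec_add, dotProduct_add] at hM hJ ⊢
    exact hasDerivAt_div_of_riccati_pair (hMpos s hs).ne' (hJpos s hs).ne' hM hJ

/-- Proposition 4.1: if `(M,J)` is a positive solution pair of the transformed system,
then `(M, N)` with `N = M/J` is a positive solution pair of the coupled Riccati system. -/
theorem MJ_system_to_MN_system
    {l d : ℕ} (T : ℝ) (hT : 0 < T)
    (A Q Γ : ℝ → ℝ) (hA : Continuous A) (hQ : Continuous Q) (hΓ : Continuous Γ)
    (B : ℝ → Fin l → ℝ) (hB : Continuous B)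
    (C : ℝ → Fin d → ℝ) (hC : Continuous C)
    (D : ℝ → Matrix (Fin d) (Fin l) ℝ) (hD : Continuous D)
    (R : ℝ → Matrix (Fin l) (Fin l) ℝ) (hR : Continuous R)
    (hRsymm : ∀ s, (R s)ᵀ = R s)
    (G h : ℝ) (hG : 0 < G) (hh : 0 < h)
    (M J : ℝ → ℝ)
    (hSinv : ∀ s, IsUnit (Smat R M D s))
    (hMpos : ∀ s ∈ Set.Icc (0 : ℝ) T, 0 < M s)
    (hJpos : ∀ s ∈ Set.Icc (0 : ℝ) T, 0 < J s)
    (hMT : M T = G) (hJT : J T = G / h)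
    (hMode : ∀ s ∈ Set.Icc (0 : ℝ) T, HasDerivAt M
      (-(2 * A s + (∑ i, C s i ^ 2)
          + Γ s * (B s ⬝ᵥ ((Smat R M D s)⁻¹ *ᵥ (B s + (D s)ᵀ *ᵥ C s)))) * M s
        - Q s
        + ((B s + (D s)ᵀ *ᵥ C s) ⬝ᵥ ((Smat R M D s)⁻¹ *ᵥ (B s + (D s)ᵀ *ᵥ C s))) * M s ^ 2
        - (B s ⬝ᵥ ((Smat R M D s)⁻¹ *ᵥ (B s + (D s)ᵀ *ᵥ C s))) * M s ^ 2 / J s) s)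
    (hJode : ∀ s ∈ Set.Icc (0 : ℝ) T, HasDerivAt J
      (-((∑ i, C s i ^ 2)
          - (((D s)ᵀ *ᵥ C s) ⬝ᵥ ((Smat R M D s)⁻¹ *ᵥ (B s + (D s)ᵀ *ᵥ C s))) * M s
          + Γ s * (B s ⬝ᵥ ((Smat R M D s)⁻¹ *ᵥ ((D s)ᵀ *ᵥ C s)))
          + Q s / M s) * J s
        - (B s ⬝ᵥ ((Smat R M D s)⁻¹ *ᵥ ((D s)ᵀ *ᵥ C s))) * M s) s) :
    let N : ℝ → ℝ := fun s => M s / J s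
    N T = h ∧
    (∀ s ∈ Set.Icc (0 : ℝ) T, 0 < N s) ∧
    (∀ s ∈ Set.Icc (0 : ℝ) T, HasDerivAt M
      (-(2 * A s + (∑ i, C s i ^ 2)
          + Γ s * (B s ⬝ᵥ ((Smat R M D s)⁻¹ *ᵥ (B s + (D s)ᵀ *ᵥ C s)))) * M s
        - Q s
        + ((B s + (D s)ᵀ *ᵥ C s) ⬝ᵥ ((Smat R M D s)⁻¹ *ᵥ (B s + (D s)ᵀ *ᵥ C s))) * M s ^ 2
        - (B s ⬝ᵥ ((Smat R M D s)⁻¹ *ᵥ (B s + (D s)ᵀ *ᵥ C s))) * M s * N s) s) ∧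
    (∀ s ∈ Set.Icc (0 : ℝ) T, HasDerivAt N
      (-(2 * A s + Γ s * (B s ⬝ᵥ ((Smat R M D s)⁻¹ *ᵥ B s))) * N s
        + (B s ⬝ᵥ ((Smat R M D s)⁻¹ *ᵥ (B s + (D s)ᵀ *ᵥ C s))) * M s * N s
        - (B s ⬝ᵥ ((Smat R M D s)⁻¹ *ᵥ B s)) * N s ^ 2) s) :=
  MJ_system_to_MN_system_general T A Q Γ B C D R G h hG M J hMpos hJpos hMT hJT hMode hJode
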